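/- arXiv:2507.13749 — 8 statements merged into one kernel-verified Lean document; each statement's English description precedes it below -/
import Mathlib

section
/- Let A be a commutative ring and 𝔞 an ideal of A. The quotient module A/𝔞 is a monoform A-module if and only if 𝔞 is a prime ideal of A. -/
/-- A module `M` over `A` is *monoform* if it is nonzero and for every nonzero
submodule `N` of `M`, no nonzero submodule of `M` embeds into `M ⧸ N`. -/
def Monoform (A M : Type*) [Ring A] [AddCommGroup M] [Module A M] : Prop :=
  Nontrivial M ∧
    ∀ (N : Submodule A M), N ≠ ⊥ →
      ∀ (K : Submodule A M) (f : K →ₗ[A] M ⧸ N), Function.Injective f → K = ⊥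

/-! A prime `𝔞` makes `A ⧸ 𝔞` monoform: a nonzero `N` contains some `ā ≠ 0`, and `a` kills
`(A ⧸ 𝔞) ⧸ N` while acting injectively on `A ⧸ 𝔞`, so nothing nonzero embeds into the quotient.
Conversely, if `ab ∈ 𝔞` with `a ∉ 𝔞`, then `A ∙ ā ≅ A ⧸ I` for `I = Ann(ā) ⊇ 𝔞 + (b)`, and
`A ⧸ I` is the quotient of `A ⧸ 𝔞` by `I / 𝔞`; monoformity forces `I / 𝔞 = 0`, i.e. `b ∈ 𝔞`. -/

namespace Submodule

variable {R M : Type*} [CommRing R] [AddCommGroup M] [Module R M]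

theorem eq_bot_of_injective_of_isSMulRegular {N K : Submodule R M} {a : R}
    (hN : ∀ x : M, a • x ∈ N) (ha : IsSMulRegular M a) (f : K →ₗ[R] M ⧸ N)
    (hf : Function.Injective f) : K = ⊥ := by
  refine (Submodule.eq_bot_iff K).mpr fun x hx => ?_
  have hkill : f (a • ⟨x, hx⟩) = f 0 := by
    obtain ⟨y, hy⟩ := Submodule.Quotient.mk_surjective N (f ⟨x, hx⟩)
    rw [map_smul, ← hy, ← Submodule.Quotient.mk_smul, map_zero,
      Submodule.Quotient.mk_eq_zero]
    exact hN y
  have hax : a • x = a • (0 : M) := by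
    rw [smul_zero]
    simpa using congrArg Subtype.val (hf hkill)
  exact ha hax

end Submodule

namespace Ideal

variable {A : Type*} [CommRing A] {𝔞 : Ideal A}

theorem smul_mem_of_mk_mem {N : Submodule A (A ⧸ 𝔞)} {a : A}
    (ha : Submodule.Quotient.mk a ∈ N) (x : A ⧸ 𝔞) : a • x ∈ N := by
  obtain ⟨c, rfl⟩ := Submodule.Quotient.mk_surjective 𝔞 x
  rw [← Submodule.Quotient.mk_smul, smul_eq_mul, mul_comm, ← smul_eq_mul,
    Submodule.Quotient.mk_smul]
  exact N.smul_mem c ha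

theorem IsPrime.isSMulRegular_quotient (h𝔞 : 𝔞.IsPrime) {a : A} (ha : a ∉ 𝔞) :
    IsSMulRegular (A ⧸ 𝔞) a := by
  intro x y hxy
  simp only [Algebra.smul_def, Ideal.Quotient.algebraMap_eq] at hxy
  exact mul_left_cancel₀ (Ideal.Quotient.eq_zero_iff_mem.not.mpr ha) hxy

theorem IsPrime.monoform_quotient (h𝔞 : 𝔞.IsPrime) : Monoform A (A ⧸ 𝔞) := by
  refine ⟨Submodule.Quotient.nontrivial_iff.mpr h𝔞.ne_top, fun N hN K f hf => ?_⟩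
  obtain ⟨x, hxN, hx0⟩ := (Submodule.ne_bot_iff N).mp hN
  obtain ⟨a, rfl⟩ := Submodule.Quotient.mk_surjective 𝔞 x
  have ha : a ∉ 𝔞 := fun h => hx0 ((Submodule.Quotient.mk_eq_zero 𝔞).mpr h)
  exact Submodule.eq_bot_of_injective_of_isSMulRegular (smul_mem_of_mk_mem hxN)
    (h𝔞.isSMulRegular_quotient ha) f hf

theorem le_torsionOf_quotient (x : A ⧸ 𝔞) : 𝔞 ≤ torsionOf A (A ⧸ 𝔞) x := by
  intro c hc
  obtain ⟨y, rfl⟩ := Submodule.Quotient.mk_surjective 𝔞 x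
  rw [mem_torsionOf_iff, ← Submodule.Quotient.mk_smul, Submodule.Quotient.mk_eq_zero]
  exact 𝔞.mul_mem_right y hc

theorem torsionOf_le_of_monoform_quotient (h : Monoform A (A ⧸ 𝔞)) {x : A ⧸ 𝔞} (hx : x ≠ 0) :
    torsionOf A (A ⧸ 𝔞) x ≤ 𝔞 := by
  by_contra hI
  let N := Submodule.map 𝔞.mkQ (torsionOf A (A ⧸ 𝔞) x)
  have hN : N ≠ ⊥ := by
    rwa [Ne, ← LinearMap.le_ker_iff_map, Submodule.ker_mkQ]
  let e : (A ∙ x) ≃ₗ[A] (A ⧸ 𝔞) ⧸ N :=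
    (quotTorsionOfEquivSpanSingleton A _ x).symm ≪≫ₗ
      (Submodule.quotientQuotientEquivQuotient 𝔞 _ (le_torsionOf_quotient x)).symm
  exact hx (Submodule.span_singleton_eq_bot.mp (h.2 _ hN _ e.toLinearMap e.injective))

end Ideal

theorem quotient_monoform_iff_prime {A : Type*} [CommRing A] (𝔞 : Ideal A) :
    Monoform A (A ⧸ 𝔞) ↔ 𝔞.IsPrime := by
  refine ⟨fun h => ?_, Ideal.IsPrime.monoform_quotient⟩
  refine ⟨Submodule.Quotient.nontrivial_iff.mp h.1, fun {a b} hab => ?_⟩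
  by_cases ha : a ∈ 𝔞
  · exact .inl ha
  have hx : (Submodule.Quotient.mk a : A ⧸ 𝔞) ≠ 0 :=
    fun h0 => ha ((Submodule.Quotient.mk_eq_zero 𝔞).mp h0)
  refine .inr (Ideal.torsionOf_le_of_monoform_quotient h hx ?_)
  rw [Ideal.mem_torsionOf_iff, ← Submodule.Quotient.mk_smul, smul_eq_mul, mul_comm,
    Submodule.Quotient.mk_eq_zero]
  exact hab
end

section
/- The relation of atom-equivalence is transitive on monoform modules: if H₁, H₂, H₃ are monoform modules over a ring A, H₁ and H₂ have a common nonzero subobject (i.e., there exist nonzero submodules of H₁ and H₂ that are isomorphic), and H₂ and H₃ have a common nonzero subobject, then H₁ and H₃ have a common nonzero subobject. -/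
/-- Two modules have a common nonzero subobject if some nonzero submodule of
one is isomorphic to a submodule of the other. -/
def CommonNonzeroSubobject (A M₁ M₂ : Type*) [Ring A] [AddCommGroup M₁] [Module A M₁]
    [AddCommGroup M₂] [Module A M₂] : Prop :=
  ∃ (K₁ : Submodule A M₁) (K₂ : Submodule A M₂),
    K₁ ≠ ⊥ ∧ Nonempty (K₁ ≃ₗ[A] K₂)

/-!
A common nonzero subobject of `H₁, H₂` and one of `H₂, H₃` give two nonzero submodules
`K₂, L₂` of `H₂`, which meet nontrivially because monoform modules are uniform. Transporting `K₂ ⊓ L₂` back along the two isomorphisms yields isomorphic nonzero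
submodules of `H₁` and `H₃`.
-/

theorem Monoform.inf_ne_bot {A M : Type*} [Ring A] [AddCommGroup M] [Module A M]
    (h : Monoform A M) {N₁ N₂ : Submodule A M} (h₁ : N₁ ≠ ⊥) (h₂ : N₂ ≠ ⊥) :
    N₁ ⊓ N₂ ≠ ⊥ := fun hinf =>
  -- `N₁ → M → M ⧸ N₂` has kernel `N₁ ⊓ N₂`.
  h₁ <| h.2 N₂ h₂ N₁ (N₂.mkQ.domRestrict N₁) <| by
    simpa [disjoint_iff] using hinf

section Transport

variable {A M N : Type*} [Semiring A] [AddCommMonoid M] [Module A M]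
  [AddCommMonoid N] [Module A N]

theorem Submodule.ne_bot_of_linearEquiv {p : Submodule A M} {q : Submodule A N}
    (e : p ≃ₗ[A] q) (hp : p ≠ ⊥) : q ≠ ⊥ := by
  rw [← Submodule.nontrivial_iff_ne_bot] at hp ⊢
  exact e.toEquiv.symm.nontrivial

theorem Submodule.exists_linearEquiv_of_le_of_injective {K Q : Submodule A M} (hQK : Q ≤ K)
    (f : K →ₗ[A] N) (hf : Function.Injective f) :
    ∃ P : Submodule A N, Nonempty (Q ≃ₗ[A] P) :=
  ⟨(Q.comap K.subtype).map f,
    ⟨(Submodule.comapSubtypeEquivOfLe hQK).symm.trans (Submodule.equivMapOfInjective f hf _)⟩⟩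

end Transport

theorem atomEquiv_trans_general {A H₁ H₂ H₃ : Type*} [Ring A]
    [AddCommGroup H₁] [Module A H₁] [AddCommGroup H₂] [Module A H₂]
    [AddCommGroup H₃] [Module A H₃]
    (h₂ : Monoform A H₂)
    (h₁₂ : CommonNonzeroSubobject A H₁ H₂)
    (h₂₃ : CommonNonzeroSubobject A H₂ H₃) :
    CommonNonzeroSubobject A H₁ H₃ := by
  obtain ⟨K₁, K₂, hK₁, ⟨e⟩⟩ := h₁₂
  obtain ⟨L₂, L₃, hL₂, ⟨e'⟩⟩ := h₂₃
  have hQ : K₂ ⊓ L₂ ≠ ⊥ := h₂.inf_ne_bot (Submodule.ne_bot_of_linearEquiv e hK₁) hL₂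
  obtain ⟨P₁, ⟨e₁⟩⟩ := Submodule.exists_linearEquiv_of_le_of_injective inf_le_left
    (K₁.subtype ∘ₗ e.symm.toLinearMap) (K₁.injective_subtype.comp e.symm.injective)
  obtain ⟨P₃, ⟨e₃⟩⟩ := Submodule.exists_linearEquiv_of_le_of_injective inf_le_right
    (L₃.subtype ∘ₗ e'.toLinearMap) (L₃.injective_subtype.comp e'.injective)
  exact ⟨P₁, P₃, Submodule.ne_bot_of_linearEquiv e₁ hQ, ⟨e₁.symm.trans e₃⟩⟩

/-- Atom equivalence is transitive on monoform modules. -/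
theorem atomEquiv_trans {A H₁ H₂ H₃ : Type*} [Ring A]
    [AddCommGroup H₁] [Module A H₁] [AddCommGroup H₂] [Module A H₂]
    [AddCommGroup H₃] [Module A H₃]
    (h₁ : Monoform A H₁) (h₂ : Monoform A H₂) (h₃ : Monoform A H₃)
    (h₁₂ : CommonNonzeroSubobject A H₁ H₂)
    (h₂₃ : CommonNonzeroSubobject A H₂ H₃) :
    CommonNonzeroSubobject A H₁ H₃ :=
  atomEquiv_trans_general h₂ h₁₂ h₂₃
end

section
/- Let A be a commutative ring and E a nonzero uniform A-module. Then the set p_E = { a ∈ A | there exists a nonzero x ∈ E with a·x = 0 }, equal to the union of the annihilators of the nonzero elements of E, is a prime ideal of A. -/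
/-! The annihilators `Ann x` of the nonzero `x ∈ E` form a directed family of ideals: for nonzero
`x` and `y`, uniformity gives a nonzero `z ∈ Ax ∩ Ay`, and `Ann x ⊔ Ann y ≤ Ann z`. Hence their
union is their supremum, an ideal. It is prime because whenever `a b` kills `x ≠ 0`, either
`b • x = 0` or `a` kills the nonzero element `b • x`. -/

open Submodule

section

variable {A E : Type*} [CommRing A] [AddCommGroup E] [Module A E]

theorem Ideal.isPrime_of_mem_iff_exists_smul_eq_zero {p : Ideal A}
    (hp : ∀ a, a ∈ p ↔ ∃ x : E, x ≠ 0 ∧ a • x = 0) : p.IsPrime := by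
  refine ⟨fun htop => ?_, fun {a b} hab => ?_⟩
  · obtain ⟨x, hx, h1x⟩ := (hp 1).1 (htop ▸ mem_top)
    exact hx (one_smul A x ▸ h1x)
  · obtain ⟨x, hx, habx⟩ := (hp _).1 hab
    by_cases hbx : b • x = 0
    · exact Or.inr ((hp b).2 ⟨x, hx, hbx⟩)
    · exact Or.inl ((hp a).2 ⟨b • x, hbx, by rwa [← mul_smul]⟩)

theorem directed_annihilator_span_singleton
    (hUnif : ∀ N K : Submodule A E, N ≠ ⊥ → K ≠ ⊥ → N ⊓ K ≠ ⊥) :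
    Directed (· ≤ ·) fun x : {x : E // x ≠ 0} => (span A {(x : E)}).annihilator := by
  rintro ⟨x, hx⟩ ⟨y, hy⟩
  obtain ⟨z, ⟨hzx, hzy⟩, hz⟩ := (Submodule.ne_bot_iff _).1 <|
    hUnif (span A {x}) (span A {y}) (by simpa using hx) (by simpa using hy)
  exact ⟨⟨z, hz⟩, annihilator_mono ((span_singleton_le_iff_mem z _).2 hzx),
    annihilator_mono ((span_singleton_le_iff_mem z _).2 hzy)⟩

theorem mem_iSup_annihilator_span_singleton_iff [Nontrivial E]
    (hUnif : ∀ N K : Submodule A E, N ≠ ⊥ → K ≠ ⊥ → N ⊓ K ≠ ⊥) (a : A) :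
    a ∈ ⨆ x : {x : E // x ≠ 0}, (span A {(x : E)}).annihilator ↔ ∃ x : E, x ≠ 0 ∧ a • x = 0 := by
  have : Nonempty {x : E // x ≠ 0} := nonempty_subtype.2 (exists_ne 0)
  rw [mem_iSup_of_directed _ (directed_annihilator_span_singleton hUnif)]
  simp only [mem_annihilator_span_singleton, Subtype.exists, exists_prop]

end

/-- For a nonzero uniform module `E` over a commutative ring `A`, the set of
elements of `A` annihilating some nonzero element of `E` (the union of the
annihilators of the nonzero elements) is a prime ideal. -/
theorem union_ann_prime {A E : Type*} [CommRing A] [AddCommGroup E] [Module A E]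
    [Nontrivial E]
    (hUnif : ∀ (N K : Submodule A E), N ≠ ⊥ → K ≠ ⊥ → N ⊓ K ≠ ⊥) :
    ∃ p : Ideal A, p.IsPrime ∧ ∀ a : A, a ∈ p ↔ ∃ x : E, x ≠ 0 ∧ a • x = 0 :=
  ⟨_, Ideal.isPrime_of_mem_iff_exists_smul_eq_zero (mem_iSup_annihilator_span_singleton_iff hUnif),
    mem_iSup_annihilator_span_singleton_iff hUnif⟩
end

section
/- Let A be a commutative ring, 𝔭 a prime ideal of A, and E an injective hull of A/𝔭. Then for every nonzero element x of E, the annihilator of x is contained in 𝔭. -/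
/-! Every nonzero `x ∈ E` has a nonzero multiple `c • x = i q`; then `a • x = 0` forces
`a • q = 0` in the domain `A ⧸ 𝔭`, so `a ∈ 𝔭`. -/

/-- `i : M →ₗ[A] E` exhibits `E` as an injective hull of `M`: `E` is an
injective module containing (the image of) `M` as an essential submodule. -/
def IsInjectiveHull {A M E : Type*} [Ring A] [AddCommGroup M] [Module A M]
    [AddCommGroup E] [Module A E] (i : M →ₗ[A] E) : Prop :=
  Module.Injective A E ∧ Function.Injective i ∧
    ∀ K : Submodule A E, K ≠ ⊥ → K ⊓ LinearMap.range i ≠ ⊥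

theorem Submodule.exists_smul_mem_ne_zero_of_essential {R E : Type*} [Semiring R]
    [AddCommMonoid E] [Module R E] {N : Submodule R E}
    (hN : ∀ K : Submodule R E, K ≠ ⊥ → K ⊓ N ≠ ⊥) {x : E} (hx : x ≠ 0) :
    ∃ c : R, c • x ∈ N ∧ c • x ≠ 0 := by
  have hspan : R ∙ x ≠ ⊥ := by rwa [ne_eq, Submodule.span_singleton_eq_bot]
  obtain ⟨y, ⟨hyx, hyN⟩, hy0⟩ := Submodule.exists_mem_ne_zero_of_ne_bot (hN _ hspan)
  obtain ⟨c, rfl⟩ := Submodule.mem_span_singleton.mp hyx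
  exact ⟨c, hyN, hy0⟩

theorem LinearMap.exists_ne_zero_smul_eq_zero_of_essential_range {R M E : Type*} [CommRing R]
    [AddCommGroup M] [Module R M] [AddCommGroup E] [Module R E] {i : M →ₗ[R] E}
    (hinj : Function.Injective i) (hess : ∀ K : Submodule R E, K ≠ ⊥ → K ⊓ range i ≠ ⊥)
    {x : E} (hx : x ≠ 0) : ∃ m : M, m ≠ 0 ∧ ∀ a : R, a • x = 0 → a • m = 0 := by
  obtain ⟨c, ⟨m, hm⟩, hcx⟩ := Submodule.exists_smul_mem_ne_zero_of_essential hess hx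
  refine ⟨m, fun h ↦ hcx (by rw [← hm, h, map_zero]), fun a hax ↦ hinj ?_⟩
  rw [map_smul, hm, smul_comm, hax, smul_zero, map_zero]

theorem Ideal.Quotient.mem_of_smul_eq_zero {A : Type*} [CommRing A] {𝔭 : Ideal A} [𝔭.IsPrime]
    {a : A} {q : A ⧸ 𝔭} (hq : q ≠ 0) (h : a • q = 0) : a ∈ 𝔭 := by
  rw [Algebra.smul_def, mul_eq_zero, Ideal.Quotient.algebraMap_eq,
    Ideal.Quotient.eq_zero_iff_mem] at h
  exact h.resolve_right hq

/-- If  is an injective hull of  for a prime , then the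
annihilator of any nonzero element of  is contained in . -/
theorem ann_le_prime {A E : Type*} [CommRing A] [AddCommGroup E] [Module A E]
    (𝔭 : Ideal A) (h𝔭 : 𝔭.IsPrime) (i : (A ⧸ 𝔭) →ₗ[A] E)
    (hE : IsInjectiveHull i) :
    ∀ x : E, x ≠ 0 → ∀ a : A, a • x = 0 → a ∈ 𝔭 := by
  obtain ⟨-, hinj, hess⟩ := hE
  intro x hx a hax
  obtain ⟨q, hq, hann⟩ := LinearMap.exists_ne_zero_smul_eq_zero_of_essential_range hinj hess hx
  exact Ideal.Quotient.mem_of_smul_eq_zero hq (hann a hax)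
end

section
/- Let A be a commutative ring, 𝔭 a prime ideal, E an injective hull of A/𝔭, and 𝔞 an ideal of A. Then there exists a nonzero A-linear map A/𝔞 → E if and only if 𝔞 ⊆ 𝔭. -/
/-! A nonzero map `A ⧸ 𝔞 → E` is the same as a nonzero `e ∈ E` killed by `𝔞`. Every nonzero
`e ∈ E` has a nonzero multiple `a • e = i x` in the copy of `A ⧸ 𝔭`, and `r • e = 0` forces
`r • x = 0`, i.e. `r ∈ 𝔭` because `A ⧸ 𝔭` is a domain. Conversely `i 1` is killed by `𝔭 ⊇ 𝔞`. -/

theorem Ideal.exists_quotient_linearMap_ne_zero_iff {R M : Type*} [CommRing R] [AddCommGroup M]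
    [Module R M] (I : Ideal R) :
    (∃ f : (R ⧸ I) →ₗ[R] M, f ≠ 0) ↔ ∃ m : M, m ≠ 0 ∧ ∀ r ∈ I, r • m = 0 := by
  constructor
  · rintro ⟨f, hf⟩
    refine ⟨f (I.mkQ 1), fun h => hf ?_, fun r hr => ?_⟩
    · exact Submodule.linearMap_qext I (LinearMap.ext_ring h)
    · rw [← map_smul, ← map_smul, smul_eq_mul, mul_one, Submodule.mkQ_apply,
        (Submodule.Quotient.mk_eq_zero I).2 hr, map_zero]
  · rintro ⟨m, hm, hann⟩
    refine ⟨I.liftQ (LinearMap.toSpanSingleton R M m) fun r hr => LinearMap.mem_ker.2 (hann r hr),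
      fun h => hm ?_⟩
    have h1 := LinearMap.congr_fun h (I.mkQ 1)
    rwa [Submodule.mkQ_apply, Submodule.liftQ_apply, LinearMap.toSpanSingleton_apply_one] at h1

theorem Ideal.Quotient.smul_eq_zero_iff_mem {A : Type*} [CommRing A] {𝔭 : Ideal A}
    [𝔭.IsPrime] {x : A ⧸ 𝔭} (hx : x ≠ 0) {r : A} : r • x = 0 ↔ r ∈ 𝔭 := by
  rw [Algebra.smul_def, mul_eq_zero, or_iff_left hx, Ideal.Quotient.algebraMap_eq,
    Ideal.Quotient.eq_zero_iff_mem]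

theorem exists_apply_eq_smul_of_ne_zero {R M E : Type*} [Ring R] [AddCommGroup M] [Module R M]
    [AddCommGroup E] [Module R E] {i : M →ₗ[R] E}
    (hess : ∀ K : Submodule R E, K ≠ ⊥ → K ⊓ LinearMap.range i ≠ ⊥) {e : E} (he : e ≠ 0) :
    ∃ a : R, ∃ x : M, x ≠ 0 ∧ i x = a • e := by
  have hspan : Submodule.span R {e} ≠ ⊥ := by simpa [Submodule.span_singleton_eq_bot] using he
  obtain ⟨z, hz, hz0⟩ := Submodule.exists_mem_ne_zero_of_ne_bot (hess _ hspan)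
  obtain ⟨hze, x, hx⟩ := Submodule.mem_inf.1 hz
  obtain ⟨a, rfl⟩ := Submodule.mem_span_singleton.1 hze
  exact ⟨a, x, fun h => hz0 (by rw [← hx, h, map_zero]), hx⟩

theorem mem_of_smul_eq_zero_of_essential {A E : Type*} [CommRing A] [AddCommGroup E]
    [Module A E] {𝔭 : Ideal A} [𝔭.IsPrime] {i : (A ⧸ 𝔭) →ₗ[A] E} (hi : Function.Injective i)
    (hess : ∀ K : Submodule A E, K ≠ ⊥ → K ⊓ LinearMap.range i ≠ ⊥) {e : E} (he : e ≠ 0)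
    {r : A} (hre : r • e = 0) : r ∈ 𝔭 := by
  obtain ⟨a, x, hx, hix⟩ := exists_apply_eq_smul_of_ne_zero hess he
  rw [← Ideal.Quotient.smul_eq_zero_iff_mem hx]
  apply hi
  rw [map_smul, hix, smul_comm, hre, smul_zero, map_zero]

/-- For an injective hull  of  and any ideal , there is a nonzero
map  iff . -/
theorem hom_quotient_ne_zero_iff {A E : Type*} [CommRing A] [AddCommGroup E]
    [Module A E] (𝔭 : Ideal A) (h𝔭 : 𝔭.IsPrime) (i : (A ⧸ 𝔭) →ₗ[A] E)
    (hE : IsInjectiveHull i) (𝔞 : Ideal A) :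
    (∃ f : (A ⧸ 𝔞) →ₗ[A] E, f ≠ 0) ↔ 𝔞 ≤ 𝔭 := by
  have := h𝔭
  obtain ⟨_, hi, hess⟩ := hE
  rw [Ideal.exists_quotient_linearMap_ne_zero_iff]
  constructor
  · rintro ⟨e, he, hann⟩ r hr
    exact mem_of_smul_eq_zero_of_essential hi hess he (hann r hr)
  · intro h
    have hone : (1 : A ⧸ 𝔭) ≠ 0 := one_ne_zero
    refine ⟨i 1, (map_ne_zero_iff i hi).2 hone, fun r hr => ?_⟩
    rw [← map_smul, (Ideal.Quotient.smul_eq_zero_iff_mem hone).2 (h hr), map_zero]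
end

section
/- (Cohen's theorem) Let A be a commutative ring in which every prime ideal is finitely generated. Then A is noetherian. -/
/-- Cohen's theorem: if every prime ideal of a commutative ring `A` is
finitely generated, then `A` is noetherian. -/
theorem cohen {A : Type*} [CommRing A]
    (h : ∀ p : Ideal A, p.IsPrime → p.FG) : IsNoetherianRing A :=
  IsNoetherianRing.of_prime h
end

section
/- Every nonzero noetherian module over a ring contains a monoform submodule. -/
/-!
Among the submodules `N` of `M` such that some nonzero submodule of `M` embeds into `M ⧸ N`
(for instance `N = ⊥`), choose a maximal one, and let `f : K ↪ M ⧸ N` be such an embedding.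
Then `K` is monoform: if a nonzero `K₀ ≤ K` embedded into `K ⧸ N₀` with `N₀ ≠ ⊥`, then, since
`K ⧸ N₀` embeds into `(M ⧸ N) ⧸ f(N₀) ≅ M ⧸ N'` with `N < N'`, the submodule `K₀` of `M` would
embed into `M ⧸ N'`, against the maximality of `N`.
-/

open Function Submodule

section

variable {A : Type*} [Ring A]

namespace Submodule

variable {M P Q : Type*} [AddCommGroup M] [Module A M] [AddCommGroup P] [Module A P]
  [AddCommGroup Q] [Module A Q]

theorem mapQ_map_injective {f : P →ₗ[A] Q} (hf : Injective f) (p : Submodule A P) :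
    Injective (p.mapQ (p.map f) f (p.le_comap_map f)) := by
  rw [← LinearMap.ker_eq_bot, ker_mapQ, comap_map_eq_of_injective hf, mkQ_map_self]

theorem lt_comap_mkQ (N : Submodule A M) {L : Submodule A (M ⧸ N)} (hL : L ≠ ⊥) :
    N < L.comap N.mkQ := by
  simpa only [comap_bot, ker_mkQ] using
    (comap_lt_comap_iff_of_surjective N.mkQ_surjective).2 (bot_lt_iff_ne_bot.2 hL)

noncomputable def quotientQuotientEquivQuotientComap (N : Submodule A M)
    (L : Submodule A (M ⧸ N)) : ((M ⧸ N) ⧸ L) ≃ₗ[A] M ⧸ L.comap N.mkQ :=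
  quotEquivOfEq _ _ (map_comap_eq_of_surjective N.mkQ_surjective L).symm ≪≫ₗ
    quotientQuotientEquivQuotient N _ (le_comap_mkQ N L)

end Submodule

variable {M : Type*} [AddCommGroup M] [Module A M]

theorem Monoform.of_injective_of_forall_lt {N K : Submodule A M} (hK : K ≠ ⊥)
    {f : K →ₗ[A] M ⧸ N} (hf : Injective f)
    (hmax : ∀ N', N < N' → ∀ (K' : Submodule A M) (g : K' →ₗ[A] M ⧸ N'), Injective g → K' = ⊥) :
    Monoform A K := by
  refine ⟨nontrivial_iff_ne_bot.2 hK, fun N₀ hN₀ K₀ f₀ hf₀ => ?_⟩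
  let L := N₀.map f
  have hL : L ≠ ⊥ := fun h =>
    hN₀ (map_injective_of_injective hf (h.trans (Submodule.map_bot f).symm))
  let e := K₀.equivMapOfInjective K.subtype K.injective_subtype
  let g := (N.quotientQuotientEquivQuotientComap L).toLinearMap ∘ₗ N₀.mapQ L f (N₀.le_comap_map f)
    ∘ₗ f₀ ∘ₗ e.symm.toLinearMap
  have hg : Injective g := by
    simp only [g, LinearMap.coe_comp, LinearEquiv.coe_coe]
    exact (LinearEquiv.injective _).comp <| (mapQ_map_injective hf N₀).comp <|
      hf₀.comp e.symm.injective
  exact map_injective_of_injective K.injective_subtype <|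
    (hmax _ (N.lt_comap_mkQ hL) _ g hg).trans (Submodule.map_bot _).symm

end

/-- Every nonzero noetherian module contains a monoform submodule. -/
theorem exists_monoform_submodule {A M : Type*} [Ring A] [AddCommGroup M]
    [Module A M] [IsNoetherian A M] [Nontrivial M] :
    ∃ N : Submodule A M, N ≠ ⊥ ∧ Monoform A N := by
  let S : Set (Submodule A M) :=
    {N | ∃ K : Submodule A M, K ≠ ⊥ ∧ ∃ f : K →ₗ[A] M ⧸ N, Injective f}
  have hbot : ⊥ ∈ S :=
    ⟨⊤, top_ne_bot, (⊥ : Submodule A M).mkQ ∘ₗ (⊤ : Submodule A M).subtype,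
      (LinearMap.ker_eq_bot.1 (ker_mkQ ⊥)).comp (injective_subtype ⊤)⟩
  obtain ⟨N, ⟨K, hK, f, hf⟩, hmax⟩ := set_has_maximal_iff_noetherian.2 ‹_› S ⟨⊥, hbot⟩
  exact ⟨K, hK, Monoform.of_injective_of_forall_lt hK hf fun N' hN' K' g hg =>
    by_contra fun hK' => hmax N' ⟨K', hK', g, hg⟩ hN'⟩
end

section
/- Let A be a commutative ring, 𝔞 and 𝔟 ideals of A, and 𝔭 a prime ideal with injective hull E = E(A/𝔭). Then Hom_A(A/(𝔞+𝔟), E) ≠ 0 if and only if Hom_A(A/𝔞, E) ≠ 0 and Hom_A(A/𝔟, E) ≠ 0. -/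
namespace Ideal

theorem torsionOf_map_of_injective {R M N : Type*} [Semiring R] [AddCommMonoid M] [Module R M]
    [AddCommMonoid N] [Module R N] {f : M →ₗ[R] N} (hf : Function.Injective f) (m : M) :
    torsionOf R N (f m) = torsionOf R M m := by
  ext a
  rw [mem_torsionOf_iff, mem_torsionOf_iff, ← map_smul, ← f.map_zero, hf.eq_iff]

theorem torsionOf_le_torsionOf_smul {R M : Type*} [CommSemiring R] [AddCommMonoid M]
    [Module R M] (c : R) (m : M) : torsionOf R M m ≤ torsionOf R M (c • m) := fun a ha => by
  rw [mem_torsionOf_iff, smul_comm, (mem_torsionOf_iff m a).mp ha, smul_zero]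

theorem torsionOf_quotient_eq_of_ne_zero {A : Type*} [CommRing A] {𝔭 : Ideal A} [𝔭.IsPrime]
    {z : A ⧸ 𝔭} (hz : z ≠ 0) : torsionOf A (A ⧸ 𝔭) z = 𝔭 := by
  ext a
  rw [mem_torsionOf_iff, Algebra.smul_def, mul_eq_zero, or_iff_left hz,
    Quotient.algebraMap_eq, Quotient.eq_zero_iff_mem]

theorem exists_quotient_linearMap_ne_zero_iff_s18 {A M : Type*} [CommRing A] [AddCommGroup M]
    [Module A M] (I : Ideal A) :
    (∃ f : (A ⧸ I) →ₗ[A] M, f ≠ 0) ↔ ∃ m : M, m ≠ 0 ∧ I ≤ torsionOf A M m := by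
  constructor
  · rintro ⟨f, hf⟩
    refine ⟨f (Submodule.Quotient.mk 1), fun h => hf ?_, fun a ha => ?_⟩
    · exact Submodule.linearMap_qext _ (LinearMap.ext_ring (by simpa using h))
    · rw [mem_torsionOf_iff, ← map_smul, ← Submodule.Quotient.mk_smul, smul_eq_mul, mul_one,
        (Submodule.Quotient.mk_eq_zero I).mpr ha, map_zero]
  · rintro ⟨m, hm, hI⟩
    refine ⟨I.liftQ (LinearMap.toSpanSingleton A M m) hI, fun h => hm ?_⟩
    rw [← LinearMap.toSpanSingleton_eq_zero_iff (R := A), ← I.liftQ_mkQ _ hI, h,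
      LinearMap.zero_comp]

end Ideal

open Ideal

section EssentialExtension

variable {A E : Type*} [CommRing A] [AddCommGroup E] [Module A E] {𝔭 : Ideal A} [𝔭.IsPrime]
  {i : (A ⧸ 𝔭) →ₗ[A] E}

theorem torsionOf_le_of_essential (hi : Function.Injective i)
    (hess : ∀ K : Submodule A E, K ≠ ⊥ → K ⊓ LinearMap.range i ≠ ⊥)
    {e : E} (he : e ≠ 0) : torsionOf A E e ≤ 𝔭 := by
  have hspan : A ∙ e ≠ ⊥ := by simpa [Submodule.span_singleton_eq_bot] using he
  obtain ⟨x, ⟨hxe, z, rfl⟩, hx⟩ := (Submodule.ne_bot_iff _).mp (hess _ hspan)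
  obtain ⟨c, hc⟩ := Submodule.mem_span_singleton.mp hxe
  have hz : z ≠ 0 := by rintro rfl; exact hx (map_zero i)
  calc torsionOf A E e ≤ torsionOf A E (c • e) := torsionOf_le_torsionOf_smul c e
    _ = torsionOf A (A ⧸ 𝔭) z := by rw [hc, torsionOf_map_of_injective hi]
    _ = 𝔭 := torsionOf_quotient_eq_of_ne_zero hz

theorem exists_quotient_linearMap_ne_zero_iff_le_of_essential (hi : Function.Injective i)
    (hess : ∀ K : Submodule A E, K ≠ ⊥ → K ⊓ LinearMap.range i ≠ ⊥) (𝔞 : Ideal A) :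
    (∃ f : (A ⧸ 𝔞) →ₗ[A] E, f ≠ 0) ↔ 𝔞 ≤ 𝔭 := by
  rw [exists_quotient_linearMap_ne_zero_iff_s18]
  constructor
  · rintro ⟨e, he, h𝔞⟩
    exact h𝔞.trans (torsionOf_le_of_essential hi hess he)
  · intro h𝔞
    have hone : (1 : A ⧸ 𝔭) ≠ 0 := one_ne_zero
    refine ⟨i 1, (map_ne_zero_iff i hi).mpr hone, ?_⟩
    rwa [torsionOf_map_of_injective hi, torsionOf_quotient_eq_of_ne_zero hone]

end EssentialExtension

/-- `Hom(A ⧸ (𝔞 + 𝔟), E) ≠ 0` iff `Hom(A ⧸ 𝔞, E) ≠ 0` and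
`Hom(A ⧸ 𝔟, E) ≠ 0`, where `E` is an injective hull of `A ⧸ 𝔭`. -/
theorem hom_sum_ne_zero_iff {A E : Type*} [CommRing A] [AddCommGroup E]
    [Module A E] (𝔞 𝔟 𝔭 : Ideal A) (h𝔭 : 𝔭.IsPrime)
    (i : (A ⧸ 𝔭) →ₗ[A] E) (hE : IsInjectiveHull i) :
    (∃ f : (A ⧸ (𝔞 + 𝔟)) →ₗ[A] E, f ≠ 0) ↔
      (∃ g : (A ⧸ 𝔞) →ₗ[A] E, g ≠ 0) ∧ (∃ h : (A ⧸ 𝔟) →ₗ[A] E, h ≠ 0) := by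
  obtain ⟨-, hi, hess⟩ := hE
  simp only [exists_quotient_linearMap_ne_zero_iff_le_of_essential hi hess, Ideal.add_eq_sup,
    sup_le_iff]
end
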